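/- Let U be a unitary on ℂ^{d_A} ⊗ ℂ^{d_B} and U° its index-rotated matrix viewed as a map from a d_A²-dimensional space to a d_B²-dimensional space. Define p_ME := ‖U°‖₁²/(d_A³ d_B). Then p_ME ≤ 1, with equality if and only if U°†U° = (d_B/d_A) I (i.e., U° is proportional to an isometry). -/

import Mathlib

open scoped BigOperators ComplexOrder Matrix

-- Hilbert–Schmidt (Frobenius) norm: `hsNorm A = √(Tr(AᴴA))`.
noncomputable def hsNorm {m n : Type*} [Fintype m] [Fintype n] (A : Matrix m n ℂ) : ℝ :=
  Real.sqrt ((Aᴴ * A).trace).re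

-- Trace (Schatten-1) norm: `traceNorm A = Tr √(AᴴA)`.
noncomputable def traceNorm {m n : Type*} [Fintype m] [Fintype n] [DecidableEq n]
    (A : Matrix m n ℂ) : ℝ :=
  (((Matrix.posSemidef_conjTranspose_mul_self A).1.eigenvectorUnitary.1 *
      Matrix.diagonal ((fun x : ℝ => (x : ℂ)) ∘ (Real.sqrt ·) ∘ (Matrix.posSemidef_conjTranspose_mul_self A).1.eigenvalues) *
      (star (Matrix.posSemidef_conjTranspose_mul_self A).1.eigenvectorUnitary : Matrix n n ℂ)).trace).re

-- The "rotated" matrix `U°` with entries `(U°)^{ij}_{kl} = U^{ki}_{lj}`,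
-- viewed as a `d_B² × d_A²` matrix (rows indexed by `B × B'`, columns by `A × A'`).
def rot {dA dB : ℕ} (U : Matrix (Fin dA × Fin dB) (Fin dA × Fin dB) ℂ) :
    Matrix (Fin dB × Fin dB) (Fin dA × Fin dA) ℂ :=
  Matrix.of fun p q => U (q.1, p.1) (q.2, p.2)

/-! Put `S = √(U°ᴴ U°)`, so that `‖U°‖₁ = tr S` and
`tr (Sᴴ S) = ‖U°‖₂² = ‖U‖₂² = d_A d_B` (rotation only permutes the entries of `U`).
Cauchy–Schwarz against the identity in the Hilbert–Schmidt inner product gives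
`|tr S|² ≤ d_A² tr (Sᴴ S)`, the defect being `‖S - (tr S / d_A²) • 1‖₂²`.
Hence equality holds exactly when `S`, equivalently `U°ᴴ U° = S²`, is a multiple of the identity. -/

open scoped MatrixOrder

namespace Matrix

variable {ι : Type*} [Fintype ι]

theorem PosSemidef.ofReal_re_trace {P : Matrix ι ι ℂ} (hP : P.PosSemidef) :
    (P.trace.re : ℂ) = P.trace :=
  (Complex.eq_re_of_ofReal_le (r := 0) (by rw [Complex.ofReal_zero]; exact hP.trace_nonneg)).symm

variable [DecidableEq ι]

theorem trace_conjTranspose_mul_self_sub_smul_one (T : Matrix ι ι ℂ)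
    (hι : (Fintype.card ι : ℂ) ≠ 0) :
    ((T - (T.trace / Fintype.card ι) • 1)ᴴ * (T - (T.trace / Fintype.card ι) • 1)).trace =
      (Tᴴ * T).trace - ((Complex.normSq T.trace / Fintype.card ι : ℝ) : ℂ) := by
  simp only [conjTranspose_sub, conjTranspose_smul, conjTranspose_one, sub_mul, mul_sub,
    Matrix.smul_mul, Matrix.mul_smul, one_mul, mul_one, trace_sub, trace_smul, trace_one,
    trace_conjTranspose, Complex.ofReal_div, Complex.ofReal_natCast,
    Complex.normSq_eq_conj_mul_self, smul_eq_mul, star_div₀, star_natCast, Complex.star_def]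
  field_simp
  ring

theorem re_trace_conjTranspose_mul_self_sub_smul_one [Nonempty ι] (T : Matrix ι ι ℂ) :
    ((T - (T.trace / Fintype.card ι) • 1)ᴴ *
        (T - (T.trace / Fintype.card ι) • 1)).trace.re =
      (Tᴴ * T).trace.re - Complex.normSq T.trace / Fintype.card ι := by
  rw [trace_conjTranspose_mul_self_sub_smul_one T (by simp), Complex.sub_re, Complex.ofReal_re]

theorem normSq_trace_le_card_mul_re_trace (T : Matrix ι ι ℂ) :
    Complex.normSq T.trace ≤ Fintype.card ι * (Tᴴ * T).trace.re := by
  cases isEmpty_or_nonempty ι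
  · simp [trace]
  have h := (Complex.nonneg_iff.mp (posSemidef_conjTranspose_mul_self
    (T - (T.trace / Fintype.card ι) • 1)).trace_nonneg).1
  rw [re_trace_conjTranspose_mul_self_sub_smul_one, sub_nonneg,
    div_le_iff₀ (by positivity)] at h
  linarith

theorem normSq_trace_eq_card_mul_re_trace_iff [Nonempty ι] (T : Matrix ι ι ℂ) :
    Complex.normSq T.trace = Fintype.card ι * (Tᴴ * T).trace.re ↔
      T = (T.trace / Fintype.card ι) • 1 := by
  set X := T - (T.trace / Fintype.card ι) • 1
  have hn : (0 : ℝ) < Fintype.card ι := by positivity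
  calc Complex.normSq T.trace = Fintype.card ι * (Tᴴ * T).trace.re
      ↔ (Xᴴ * X).trace.re = 0 := by
        rw [re_trace_conjTranspose_mul_self_sub_smul_one, sub_eq_zero, eq_div_iff hn.ne',
          mul_comm, eq_comm]
    _ ↔ (Xᴴ * X).trace = 0 := by
        rw [← Complex.ofReal_eq_zero, (posSemidef_conjTranspose_mul_self X).ofReal_re_trace]
    _ ↔ T = (T.trace / Fintype.card ι) • 1 := by
        rw [trace_conjTranspose_mul_self_eq_zero_iff, sub_eq_zero]

theorem sqrt_eq_smul_one_iff {M : Matrix ι ι ℂ} (hM : M.PosSemidef) {r : ℝ} (hr : 0 ≤ r) :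
    CFC.sqrt M = (√r : ℂ) • 1 ↔ M = (r : ℂ) • 1 := by
  have hsq : ((√r : ℂ) • 1 : Matrix ι ι ℂ) * (√r : ℂ) • 1 = (r : ℂ) • 1 := by
    rw [smul_mul_smul_comm, one_mul, ← Complex.ofReal_mul, Real.mul_self_sqrt hr]
  constructor
  · intro h
    rw [← CFC.sqrt_mul_sqrt_self M hM.nonneg, h, hsq]
  · rintro rfl
    exact CFC.sqrt_unique hsq
      (PosSemidef.one.smul (Complex.zero_le_real.mpr (Real.sqrt_nonneg r))).nonneg

end Matrix

section traceNorm

variable {m n : Type*} [Fintype m] [Fintype n] [DecidableEq n]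

theorem traceNorm_eq_re_trace_sqrt (A : Matrix m n ℂ) :
    traceNorm A = (CFC.sqrt (Aᴴ * A)).trace.re := by
  have hM := Matrix.posSemidef_conjTranspose_mul_self A
  rw [CFC.sqrt_eq_cfc, cfc_nnreal_eq_real _ _ hM.nonneg, hM.1.cfc_eq, Matrix.IsHermitian.cfc,
    Unitary.conjStarAlgAut_apply, traceNorm]
  congr 5
  funext x
  simp only [Function.comp_apply, Real.coe_sqrt, Real.coe_toNNReal',
    max_eq_left (hM.eigenvalues_nonneg x)]
  rfl

theorem posSemidef_sqrt_conjTranspose_mul_self (A : Matrix m n ℂ) :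
    (CFC.sqrt (Aᴴ * A)).PosSemidef :=
  Matrix.nonneg_iff_posSemidef.mp (CFC.sqrt_nonneg _)

theorem ofReal_traceNorm (A : Matrix m n ℂ) :
    (traceNorm A : ℂ) = (CFC.sqrt (Aᴴ * A)).trace := by
  rw [traceNorm_eq_re_trace_sqrt, (posSemidef_sqrt_conjTranspose_mul_self A).ofReal_re_trace]

theorem traceNorm_nonneg (A : Matrix m n ℂ) : 0 ≤ traceNorm A :=
  Complex.zero_le_real.mp <|
    ofReal_traceNorm A ▸ (posSemidef_sqrt_conjTranspose_mul_self A).trace_nonneg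

theorem conjTranspose_sqrt_mul_sqrt (A : Matrix m n ℂ) :
    (CFC.sqrt (Aᴴ * A))ᴴ * CFC.sqrt (Aᴴ * A) = Aᴴ * A := by
  rw [(posSemidef_sqrt_conjTranspose_mul_self A).1.eq,
    CFC.sqrt_mul_sqrt_self _ (Matrix.posSemidef_conjTranspose_mul_self A).nonneg]

theorem traceNorm_sq_le_card_mul_re_trace (A : Matrix m n ℂ) :
    traceNorm A ^ 2 ≤ Fintype.card n * (Aᴴ * A).trace.re := by
  have h := Matrix.normSq_trace_le_card_mul_re_trace (CFC.sqrt (Aᴴ * A))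
  rwa [← ofReal_traceNorm, Complex.normSq_ofReal, conjTranspose_sqrt_mul_sqrt, ← sq] at h

theorem traceNorm_sq_eq_card_mul_re_trace_iff [Nonempty n] (A : Matrix m n ℂ) :
    traceNorm A ^ 2 = Fintype.card n * (Aᴴ * A).trace.re ↔
      CFC.sqrt (Aᴴ * A) = ((traceNorm A : ℂ) / Fintype.card n) • 1 := by
  have h := Matrix.normSq_trace_eq_card_mul_re_trace_iff (CFC.sqrt (Aᴴ * A))
  rwa [← ofReal_traceNorm, Complex.normSq_ofReal, conjTranspose_sqrt_mul_sqrt, ← sq] at h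

end traceNorm

theorem trace_conjTranspose_mul_self_rot {dA dB : ℕ}
    (U : Matrix (Fin dA × Fin dB) (Fin dA × Fin dB) ℂ) :
    ((rot U)ᴴ * rot U).trace = (Uᴴ * U).trace := by
  rw [← Matrix.star_vec_dotProduct_vec, ← Matrix.star_vec_dotProduct_vec]
  exact Fintype.sum_equiv ((Equiv.prodProdProdComm _ _ _ _).trans (Equiv.prodComm _ _)) _ _
    fun _ => rfl

theorem trace_conjTranspose_mul_self_rot_of_mem_unitaryGroup {dA dB : ℕ}
    {U : Matrix (Fin dA × Fin dB) (Fin dA × Fin dB) ℂ}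
    (hU : U ∈ Matrix.unitaryGroup (Fin dA × Fin dB) ℂ) :
    ((rot U)ᴴ * rot U).trace = (dA * dB : ℕ) := by
  rw [trace_conjTranspose_mul_self_rot, ← Matrix.star_eq_conjTranspose,
    Matrix.mem_unitaryGroup_iff'.mp hU, Matrix.trace_one, Fintype.card_prod, Fintype.card_fin,
    Fintype.card_fin]

theorem stmt_8 (dA dB : ℕ) (hA : 0 < dA) (hB : 0 < dB)
    (U : Matrix (Fin dA × Fin dB) (Fin dA × Fin dB) ℂ)
    (hU : U ∈ Matrix.unitaryGroup (Fin dA × Fin dB) ℂ) :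
    traceNorm (rot U) ^ 2 / ((dA : ℝ) ^ 3 * dB) ≤ 1 ∧
    (traceNorm (rot U) ^ 2 / ((dA : ℝ) ^ 3 * dB) = 1 ↔
      (rot U)ᴴ * rot U = (((dB : ℂ) / dA) • 1 :
        Matrix (Fin dA × Fin dA) (Fin dA × Fin dA) ℂ)) := by
  have : NeZero dA := ⟨hA.ne'⟩
  have hr : 0 ≤ (dB / dA : ℝ) := by positivity
  have hden : (0 : ℝ) < dA ^ 3 * dB := by positivity
  have hcard : Fintype.card (Fin dA × Fin dA) = dA ^ 2 := by simp [sq]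
  have hle := traceNorm_sq_le_card_mul_re_trace (rot U)
  have hiff := traceNorm_sq_eq_card_mul_re_trace_iff (rot U)
  have htr := traceNorm_eq_re_trace_sqrt (rot U)
  have ht := traceNorm_nonneg (rot U)
  rw [trace_conjTranspose_mul_self_rot_of_mem_unitaryGroup hU, Complex.natCast_re, hcard]
    at hle hiff
  push_cast at hle hiff
  set t := traceNorm (rot U)
  have hkey : t ^ 2 = dA ^ 3 * dB ↔ t / dA ^ 2 = √(dB / dA) := by
    rw [eq_comm (b := √_), Real.sqrt_eq_iff_mul_self_eq hr (by positivity)]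
    field_simp
    constructor <;> intro h <;> linarith
  rw [div_le_one hden, div_eq_one_iff_eq hden.ne', hkey,
    show ((dB : ℂ) / dA) = ((dB / dA : ℝ) : ℂ) by push_cast; rfl,
    ← Matrix.sqrt_eq_smul_one_iff (Matrix.posSemidef_conjTranspose_mul_self _) hr]
  refine ⟨by nlinarith, fun h => ?_, fun h => ?_⟩
  · rw [hiff.mp (by nlinarith [hkey.mpr h]), ← h]
    push_cast
    rfl
  · rw [h, Matrix.trace_smul, Matrix.trace_one, hcard, smul_eq_mul, Complex.re_ofReal_mul,
      Complex.natCast_re, Nat.cast_pow] at htr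
    rw [htr]
    field_simp
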